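/- arXiv:1708.01305 — 2 statements merged into one kernel-verified Lean document; each statement's English description precedes it below -/
import Mathlib

section
/- For every integer n = 6·p₁·p₂ where p₁ < p₂ are primes with 5 ≤ p₁, we have g(n) ≥ 10, where g is Jacobsthal's function. Consequently (since γ(X_n) = 8), the domination number of X_n is strictly less than g(n). -/
/-- `D` is a dominating set of `G`. -/
def IsDomSet {V : Type*} (G : SimpleGraph V) (D : Set V) : Prop :=
  ∀ v, v ∈ D ∨ ∃ d ∈ D, G.Adj v d

/-- `D` is a total dominating set of `G`. -/
def IsTotalDomSet {V : Type*} (G : SimpleGraph V) (D : Set V) : Prop :=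
  ∀ v, ∃ d ∈ D, G.Adj v d

/-- `D` is a minimal dominating set of `G`. -/
def IsMinimalDomSet {V : Type*} (G : SimpleGraph V) (D : Set V) : Prop :=
  IsDomSet G D ∧ ∀ D' ⊂ D, ¬ IsDomSet G D'

/-- The domination number of `G`. -/
noncomputable def domNum {V : Type*} (G : SimpleGraph V) : ℕ :=
  sInf {k | ∃ D : Set V, IsDomSet G D ∧ D.ncard = k}

/-- The total domination number of `G`. -/
noncomputable def totalDomNum {V : Type*} (G : SimpleGraph V) : ℕ :=
  sInf {k | ∃ D : Set V, IsTotalDomSet G D ∧ D.ncard = k}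

/-- The upper domination number of `G`. -/
noncomputable def upperDomNum {V : Type*} (G : SimpleGraph V) : ℕ :=
  sSup {k | ∃ D : Set V, IsMinimalDomSet G D ∧ D.ncard = k}

/-- Jacobsthal's function. -/
noncomputable def jacobsthal (n : ℕ) : ℕ :=
  sInf {m | 0 < m ∧ ∀ x : ℤ, ∃ i : ℕ, i < m ∧ Int.gcd (x + i) n = 1}

/-- The unitary Cayley graph of `ℤ/nℤ`. -/
def unitaryCayley (n : ℕ) : SimpleGraph (ZMod n) where
  Adj x y := x ≠ y ∧ IsUnit (x - y)
  symm := ⟨by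
    rintro x y ⟨h1, h2⟩
    exact ⟨h1.symm, by simpa [neg_sub] using h2.neg⟩⟩
  loopless := ⟨by rintro x ⟨h, _⟩; exact h rfl⟩

/-- The direct product of complete graphs `K_{n 0} × ⋯ × K_{n (t-1)}`. -/
def completeProd (t : ℕ) (n : Fin t → ℕ) : SimpleGraph (∀ i, ZMod (n i)) where
  Adj x y := x ≠ y ∧ ∀ i, x i ≠ y i
  symm := ⟨by rintro x y ⟨h1, h2⟩; exact ⟨h1.symm, fun i => (h2 i).symm⟩⟩
  loopless := ⟨by rintro x ⟨h, _⟩; exact h rfl⟩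

/-- The direct product of balanced complete multipartite graphs
`K[a 0, b 0] × ⋯ × K[a (t-1), b (t-1)]`, where `K[a,b]` has vertex set `ZMod (a*b)`
with `x ~ y` iff `x ≢ y (mod b)`. -/
def multipartiteProd (t : ℕ) (a b : Fin t → ℕ) :
    SimpleGraph (∀ i, ZMod (a i * b i)) where
  Adj x y := x ≠ y ∧ ∀ i, (x i).val % b i ≠ (y i).val % b i
  symm := ⟨by rintro x y ⟨h1, h2⟩; exact ⟨h1.symm, fun i => (h2 i).symm⟩⟩
  loopless := ⟨by rintro x ⟨h, _⟩; exact h rfl⟩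

/-- The direct (tensor) product of two graphs. -/
def directProd {V W : Type*} (G : SimpleGraph V) (H : SimpleGraph W) :
    SimpleGraph (V × W) where
  Adj x y := G.Adj x.1 y.1 ∧ H.Adj x.2 y.2
  symm := ⟨by rintro x y ⟨h1, h2⟩; exact ⟨h1.symm, h2.symm⟩⟩
  loopless := ⟨by rintro x ⟨h, _⟩; exact G.loopless.irrefl _ h⟩

/-!
By the Chinese remainder theorem `ZMod (6 * p₁ * p₂) ≃+* ZMod 2 × ZMod 3 × ZMod p₁ × ZMod p₂`,
and `x - y` is a unit iff the residues of `x` and `y` differ in every coordinate.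

For `g(n) ≥ 10`, take `x` with residues `(0, -1, -3, -5)`: each of `x, …, x + 8` is divisible
by `2`, `3`, `p₁` or `p₂`. For `γ(X_n) ≤ 9`, nine residue vectors whose last two coordinates lie
in `{0, …, 4}` form a dominating set. As `p₁, p₂ ≥ 5`, all that matters about the last two
coordinates of a vertex is which of `0, …, 4` they equal, so domination reduces to a finite
check over `ZMod 2 × ZMod 3 × Option (Fin 5) × Option (Fin 5)`.
-/

lemma Int.gcd_eq_one_iff_isUnit_intCast (a : ℤ) (n : ℕ) :
    Int.gcd a n = 1 ↔ IsUnit (a : ZMod n) := by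
  rw [ZMod.coe_int_isUnit_iff_isCoprime, isCoprime_comm, Int.isCoprime_iff_gcd_eq_one]

lemma lt_jacobsthal {n k : ℕ} (hn : n ≠ 0) (x : ℤ)
    (hx : ∀ i < k, ¬IsUnit ((x + i : ℤ) : ZMod n)) : k < jacobsthal n := by
  have : NeZero n := ⟨hn⟩
  have hne : {m | 0 < m ∧ ∀ x : ℤ, ∃ i : ℕ, i < m ∧ Int.gcd (x + i) n = 1}.Nonempty := by
    refine ⟨n, Nat.pos_of_ne_zero hn, fun y => ⟨((1 - y : ℤ) : ZMod n).val, ZMod.val_lt _, ?_⟩⟩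
    rw [Int.gcd_eq_one_iff_isUnit_intCast]
    push_cast
    simp
  refine le_csInf hne fun m ⟨_, hm⟩ => ?_
  obtain ⟨i, hi, hunit⟩ := hm x
  by_contra! hmk
  exact hx i (by omega) ((Int.gcd_eq_one_iff_isUnit_intCast _ _).1 hunit)

lemma domNum_le_ncard {V : Type*} {G : SimpleGraph V} {D : Set V} (hD : IsDomSet G D) :
    domNum G ≤ D.ncard :=
  Nat.sInf_le ⟨D, hD, rfl⟩

lemma Function.Embedding.exists_option_eq_iff {α β : Type*} (f : α ↪ β) (b : β) :
    ∃ o : Option α, ∀ a, f a = b ↔ some a = o := by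
  by_cases h : ∃ a, f a = b
  · obtain ⟨a, rfl⟩ := h
    exact ⟨some a, fun a' => by simp [f.injective.eq_iff]⟩
  · push Not at h
    exact ⟨none, fun a => by simp [h a]⟩

def Fin.castZModEmbedding {m p : ℕ} (h : m ≤ p) : Fin m ↪ ZMod p where
  toFun k := (k : ℕ)
  inj' a b hab := by
    rw [ZMod.natCast_eq_natCast_iff', Nat.mod_eq_of_lt (by omega),
      Nat.mod_eq_of_lt (by omega)] at hab
    exact Fin.ext hab

def CoordwiseNe {α β γ δ : Type*} (x y : α × β × γ × δ) : Prop :=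
  x.1 ≠ y.1 ∧ x.2.1 ≠ y.2.1 ∧ x.2.2.1 ≠ y.2.2.1 ∧ x.2.2.2 ≠ y.2.2.2

instance {α β γ δ : Type*} [DecidableEq α] [DecidableEq β] [DecidableEq γ] [DecidableEq δ]
    (x y : α × β × γ × δ) : Decidable (CoordwiseNe x y) :=
  inferInstanceAs (Decidable (_ ∧ _ ∧ _ ∧ _))

lemma isUnit_sub_iff_coordwiseNe {K₁ K₂ K₃ K₄ : Type*} [DivisionRing K₁] [DivisionRing K₂]
    [DivisionRing K₃] [DivisionRing K₄] (x y : K₁ × K₂ × K₃ × K₄) :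
    IsUnit (x - y) ↔ CoordwiseNe x y := by
  simp [Prod.isUnit_iff, sub_ne_zero, CoordwiseNe]

lemma Nat.coprime_six_of_prime {p : ℕ} (hp : p.Prime) (h : 5 ≤ p) : Nat.Coprime 6 p :=
  Nat.Coprime.mul_left ((Nat.coprime_primes Nat.prime_two hp).2 (by omega))
    ((Nat.coprime_primes Nat.prime_three hp).2 (by omega))

def dominatingPattern : List (ZMod 2 × ZMod 3 × Fin 5 × Fin 5) :=
  [(0, 1, 0, 1), (0, 1, 4, 3), (1, 1, 3, 1), (0, 2, 4, 1), (1, 2, 1, 3), (0, 2, 3, 2),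
    (1, 0, 4, 2), (0, 0, 1, 4), (1, 2, 2, 0)]

-- `none` stands for a residue outside `{0, …, 4}`.
set_option maxRecDepth 2000 in
lemma dominatingPattern_spec : ∀ w : ZMod 2 × ZMod 3 × Option (Fin 5) × Option (Fin 5),
    ∃ t ∈ dominatingPattern, (t.1, t.2.1, some t.2.2.1, some t.2.2.2) = w ∨
      CoordwiseNe w (t.1, t.2.1, some t.2.2.1, some t.2.2.2) := by
  decide

section Residues

variable {p₁ p₂ : ℕ}

def residueEquiv (h₁ : Nat.Coprime 6 p₁) (h₂ : Nat.Coprime 6 p₂) (h₁₂ : Nat.Coprime p₁ p₂) :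
    ZMod (6 * p₁ * p₂) ≃+* ZMod 2 × ZMod 3 × ZMod p₁ × ZMod p₂ :=
  have h₃ : Nat.Coprime 3 (p₁ * p₂) :=
    .mul_right (h₁.coprime_dvd_left (by norm_num)) (h₂.coprime_dvd_left (by norm_num))
  have h₂₃ : Nat.Coprime 2 (3 * (p₁ * p₂)) :=
    .mul_right (by norm_num) (.mul_right (h₁.coprime_dvd_left (by norm_num))
      (h₂.coprime_dvd_left (by norm_num)))
  (ZMod.ringEquivCongr (by ring)).trans <| (ZMod.chineseRemainder h₂₃).trans <|
    RingEquiv.prodCongr (.refl _) <| (ZMod.chineseRemainder h₃).trans <|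
      RingEquiv.prodCongr (.refl _) (ZMod.chineseRemainder h₁₂)

variable [Fact p₁.Prime] [Fact p₂.Prime]

lemma unitaryCayley_adj_iff_coordwiseNe (h₁ : Nat.Coprime 6 p₁) (h₂ : Nat.Coprime 6 p₂)
    (h₁₂ : Nat.Coprime p₁ p₂) (x y : ZMod (6 * p₁ * p₂)) :
    (unitaryCayley (6 * p₁ * p₂)).Adj x y ↔
      CoordwiseNe (residueEquiv h₁ h₂ h₁₂ x) (residueEquiv h₁ h₂ h₁₂ y) := by
  change x ≠ y ∧ IsUnit (x - y) ↔ _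
  rw [← isUnit_map_iff (residueEquiv h₁ h₂ h₁₂), map_sub, isUnit_sub_iff_coordwiseNe]
  exact ⟨And.right, fun hxy => ⟨fun h => hxy.1 (by rw [h]), hxy⟩⟩

theorem ten_le_jacobsthal (h₁ : Nat.Coprime 6 p₁) (h₂ : Nat.Coprime 6 p₂)
    (h₁₂ : Nat.Coprime p₁ p₂) : 10 ≤ jacobsthal (6 * p₁ * p₂) := by
  set e := residueEquiv h₁ h₂ h₁₂
  obtain ⟨x, hx⟩ : ∃ x : ℤ, e x = (0, -1, -3, -5) :=
    ⟨(e.symm (0, -1, -3, -5)).cast, by rw [ZMod.intCast_zmod_cast, e.apply_symm_apply]⟩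
  refine lt_jacobsthal (NeZero.ne _) x fun i hi hunit => ?_
  rw [← isUnit_map_iff e, Int.cast_add, map_add, hx, Int.cast_natCast, map_natCast] at hunit
  simp only [Prod.isUnit_iff, isUnit_iff_ne_zero] at hunit
  obtain ⟨h2, h3, hp₁, hp₂⟩ := hunit
  simp only [Prod.fst_add, Prod.snd_add, Prod.fst_natCast, Prod.snd_natCast] at h2 h3 hp₁ hp₂
  interval_cases i
  all_goals first
    | (apply h2; decide) | (apply h3; decide)
    | (apply hp₁; push_cast; exact neg_add_cancel _)
    | (apply hp₂; push_cast; exact neg_add_cancel _)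

theorem domNum_unitaryCayley_le_nine (h₁ : 5 ≤ p₁) (h₂ : 5 ≤ p₂) (h₁₂ : p₁ ≠ p₂) :
    domNum (unitaryCayley (6 * p₁ * p₂)) ≤ 9 := by
  have hc₁ := Nat.coprime_six_of_prime Fact.out h₁
  have hc₂ := Nat.coprime_six_of_prime Fact.out h₂
  have hc₁₂ := (Nat.coprime_primes Fact.out Fact.out).2 h₁₂
  set e := residueEquiv hc₁ hc₂ hc₁₂
  set ι₁ := Fin.castZModEmbedding (p := p₁) h₁
  set ι₂ := Fin.castZModEmbedding (p := p₂) h₂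
  let embed (t : ZMod 2 × ZMod 3 × Fin 5 × Fin 5) : ZMod (6 * p₁ * p₂) :=
    e.symm (t.1, t.2.1, ι₁ t.2.2.1, ι₂ t.2.2.2)
  let D := (dominatingPattern.map embed).toFinset
  have hD : IsDomSet (unitaryCayley (6 * p₁ * p₂)) D := by
    intro v
    obtain ⟨c, hc⟩ := ι₁.exists_option_eq_iff (e v).2.2.1
    obtain ⟨d, hd⟩ := ι₂.exists_option_eq_iff (e v).2.2.2
    obtain ⟨t, ht, heq | hne⟩ := dominatingPattern_spec ((e v).1, (e v).2.1, c, d)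
    · simp only [Prod.mk.injEq, ← hc, ← hd] at heq
      refine .inl (List.mem_toFinset.2 (List.mem_map.2 ⟨t, ht, ?_⟩))
      rw [e.symm_apply_eq]
      exact Prod.ext heq.1 (Prod.ext heq.2.1 (Prod.ext heq.2.2.1 heq.2.2.2))
    · refine .inr ⟨embed t, List.mem_toFinset.2 (List.mem_map_of_mem ht), ?_⟩
      rw [unitaryCayley_adj_iff_coordwiseNe hc₁ hc₂ hc₁₂, e.apply_symm_apply]
      exact ⟨hne.1, hne.2.1, fun h => hne.2.2.1 ((hc _).1 h.symm).symm,
        fun h => hne.2.2.2 ((hd _).1 h.symm).symm⟩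
  calc domNum (unitaryCayley (6 * p₁ * p₂)) ≤ (D : Set (ZMod (6 * p₁ * p₂))).ncard :=
        domNum_le_ncard hD
    _ ≤ (dominatingPattern.map embed).length := by
        rw [Set.ncard_coe_finset]; exact List.toFinset_card_le _
    _ = 9 := by simp [dominatingPattern]

end Residues

theorem stmt11 (p₁ p₂ n : ℕ) (hp₁ : p₁.Prime) (hp₂ : p₂.Prime)
    (h1 : 5 ≤ p₁) (h12 : p₁ < p₂) (hn : n = 6 * p₁ * p₂) :
    10 ≤ jacobsthal n ∧ domNum (unitaryCayley n) < jacobsthal n := by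
  have := Fact.mk hp₁
  have := Fact.mk hp₂
  subst hn
  have hg : 10 ≤ jacobsthal (6 * p₁ * p₂) :=
    ten_le_jacobsthal (Nat.coprime_six_of_prime hp₁ h1)
      (Nat.coprime_six_of_prime hp₂ (by omega)) ((Nat.coprime_primes hp₁ hp₂).2 h12.ne)
  exact ⟨hg, (domNum_unitaryCayley_le_nine h1 (by omega) h12.ne).trans_lt hg⟩
end

section
/- For each positive integer j, there exists an integer n with more than j distinct prime factors such that the total domination number of the unitary Cayley graph X_n is strictly less than g(n), where g is Jacobsthal's function. -/
/-! Let `Q` be a set of `8j + 3` primes exceeding `15(j + 1)` and `n = 15 ∏ Q`, so `ω(n) > j`.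

Among `3, 4, …, 15j + 10` only `8j + 3` integers are prime to `15`. By the Chinese remainder
theorem there is `X ≡ 3 (mod 15)` such that, for each of these `3 + i`, its own prime of `Q`
divides `X + i`; then no element of `X, …, X + 15j + 7` is prime to `n`, so `g(n) > 15j + 8`.

On the other hand, a fixed pattern of `8` residues together with `j` full periods of `15` gives a
set `D` of `15j + 8` naturals such that for every `v` at least `8j + 4` of the `v + d`, `d ∈ D`,
are prime to `15`. The elements of `D` are smaller than every `q ∈ Q`, so each `q` divides at
most one `v + d`; hence some `v + d` is prime to `n`, and `-D` is a total dominating set of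
`X_n`. -/

open Finset Function

section Periodic

variable {p : ℕ → Prop} [DecidablePred p] {a : ℕ}

theorem card_filter_Ico_mul_eq_of_periodic (hp : Periodic p a) (t k : ℕ) :
    #{x ∈ Ico t (t + a * k) | p x} = k * Nat.count p a := by
  induction k with
  | zero => simp
  | succ k ih =>
    rw [mul_add_one, ← add_assoc, ← Ico_union_Ico_eq_Ico (b := t + a * k) (by omega) (by omega),
      filter_union,
      card_union_of_disjoint (disjoint_filter_filter (Ico_disjoint_Ico_consecutive _ _ _)), ih,
      Nat.filter_Ico_card_eq_of_periodic _ _ _ hp, add_one_mul]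

theorem card_filter_union_Ico_of_periodic (hp : Periodic p a) {S : Finset ℕ} {t : ℕ}
    (hS : ∀ x ∈ S, x < t) (k : ℕ) :
    #{x ∈ S ∪ Ico t (t + a * k) | p x} = #{x ∈ S | p x} + k * Nat.count p a := by
  rw [filter_union, card_union_of_disjoint, card_filter_Ico_mul_eq_of_periodic hp]
  refine disjoint_filter_filter (disjoint_left.2 fun x hxS hxI => ?_)
  exact (hS x hxS).not_ge (mem_Ico.1 hxI).1

end Periodic

theorem card_filter_dvd_add_le_one {q a : ℕ} {D : Finset ℕ} (hD : ∀ d ∈ D, d < q) :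
    #{d ∈ D | q ∣ a + d} ≤ 1 := by
  refine card_le_one.2 fun d hd e he => ?_
  simp only [mem_filter] at hd he
  have hde : d ≡ e [MOD q] := Nat.ModEq.add_left_cancel' a
    ((Nat.modEq_zero_iff_dvd.2 hd.2).trans (Nat.modEq_zero_iff_dvd.2 he.2).symm)
  exact hde.eq_of_lt_of_lt (hD d hd.1) (hD e he.1)

theorem card_filter_exists_dvd_add_le {Q D : Finset ℕ} (hD : ∀ q ∈ Q, ∀ d ∈ D, d < q)
    (a : ℕ) : #{d ∈ D | ∃ q ∈ Q, q ∣ a + d} ≤ #Q := by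
  calc #{d ∈ D | ∃ q ∈ Q, q ∣ a + d} = #(Q.biUnion fun q => {d ∈ D | q ∣ a + d}) := by
        congr 1; ext d; simp only [mem_filter, mem_biUnion]
        exact ⟨fun ⟨hd, q, hq, h⟩ => ⟨q, hq, hd, h⟩,
          fun ⟨q, hq, hd, h⟩ => ⟨hd, q, hq, h⟩⟩
    _ ≤ #Q * 1 := card_biUnion_le_card_mul _ _ _ fun q hq => card_filter_dvd_add_le_one (hD q hq)
    _ = #Q := mul_one _

theorem exists_coprime_mul_prod_add {m a : ℕ} {Q D : Finset ℕ} (hQ : ∀ q ∈ Q, q.Prime)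
    (hD : ∀ q ∈ Q, ∀ d ∈ D, d < q) (hcard : #Q < #{d ∈ D | m.Coprime (a + d)}) :
    ∃ d ∈ D, (m * ∏ q ∈ Q, q).Coprime (a + d) := by
  have hlt := hcard.trans_le' (card_filter_exists_dvd_add_le hD a)
  obtain ⟨d, hd⟩ := card_pos.1 ((Nat.sub_pos_of_lt hlt).trans_le (le_card_sdiff _ _))
  simp only [mem_sdiff, mem_filter, not_and, not_exists] at hd
  obtain ⟨⟨hdD, hm⟩, hQd⟩ := hd
  refine ⟨d, hdD, hm.mul_left (Nat.Coprime.prod_left fun q hq => ?_)⟩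
  exact (Nat.Prime.coprime_iff_not_dvd (hQ q hq)).2 (hQd hdD q hq)

theorem totalDomNum_le_ncard {V : Type*} {G : SimpleGraph V} {D : Set V}
    (hD : IsTotalDomSet G D) : totalDomNum G ≤ D.ncard :=
  Nat.sInf_le ⟨D, hD, rfl⟩

theorem isTotalDomSet_unitaryCayley_image_neg {n : ℕ} (hn : 1 < n) {D : Finset ℕ}
    (hD : ∀ a : ℕ, ∃ d ∈ D, n.Coprime (a + d)) :
    IsTotalDomSet (unitaryCayley n) ((fun d : ℕ => -(d : ZMod n)) '' D) := by
  have : Fact (1 < n) := ⟨hn⟩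
  intro v
  obtain ⟨d, hdD, hcop⟩ := hD v.val
  have hunit : IsUnit (v - -(d : ZMod n)) := by
    rw [sub_neg_eq_add, ← ZMod.natCast_zmod_val v, ← Nat.cast_add, ZMod.isUnit_iff_coprime]
    exact hcop.symm
  refine ⟨_, ⟨d, hdD, rfl⟩, fun h => ?_, hunit⟩
  rw [h, sub_self] at hunit
  exact not_isUnit_zero hunit

theorem totalDomNum_unitaryCayley_le_card {n : ℕ} (hn : 1 < n) {D : Finset ℕ}
    (hD : ∀ a : ℕ, ∃ d ∈ D, n.Coprime (a + d)) : totalDomNum (unitaryCayley n) ≤ #D :=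
  (totalDomNum_le_ncard (isTotalDomSet_unitaryCayley_image_neg hn hD)).trans
    ((Set.ncard_image_le D.finite_toSet).trans (Set.ncard_coe_finset D).le)

theorem exists_lt_gcd_add_eq_one {n : ℕ} (hn : n ≠ 0) (x : ℤ) :
    ∃ i : ℕ, i < n ∧ Int.gcd (x + i) n = 1 := by
  have hn' : (0 : ℤ) < n := by exact_mod_cast Nat.pos_of_ne_zero hn
  have h0 := Int.emod_nonneg (1 - x) hn'.ne'
  have hlt := Int.emod_lt_of_pos (1 - x) hn'
  refine ⟨((1 - x) % n).toNat, by omega, ?_⟩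
  have hx : x + ((1 - x) % n).toNat ≡ 1 [ZMOD n] := by
    rw [Int.toNat_of_nonneg h0]
    simpa using (Int.mod_modEq (1 - x) n).add_left x
  rw [← Int.gcd_emod, hx, Int.gcd_emod, Int.gcd_one_left]

theorem lt_jacobsthal_of_forall_gcd_ne_one {n L : ℕ} (hn : n ≠ 0) (X : ℤ)
    (hX : ∀ i < L, Int.gcd (X + i) n ≠ 1) : L < jacobsthal n := by
  by_contra! hle
  have hmem :
      jacobsthal n ∈ {m | 0 < m ∧ ∀ x : ℤ, ∃ i : ℕ, i < m ∧ Int.gcd (x + i) n = 1} :=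
    Nat.sInf_mem ⟨n, Nat.pos_of_ne_zero hn, exists_lt_gcd_add_eq_one hn⟩
  obtain ⟨i, hi, hgcd⟩ := hmem.2 X
  exact hX i (hi.trans_le hle) hgcd

theorem Int.gcd_ne_one_of_dvd {a : ℤ} {n d : ℕ} (hd : d ≠ 1) (ha : (d : ℤ) ∣ a)
    (hn : d ∣ n) : Int.gcd a n ≠ 1 := fun h => by
  have := Int.dvd_gcd ha (Int.natCast_dvd_natCast.2 hn)
  rw [h] at this
  exact hd (Nat.dvd_one.1 (by exact_mod_cast this))

theorem Int.exists_forall_dvd_sub {ι : Type*} [Finite ι] {m : ι → ℕ}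
    (hm : Pairwise (Nat.Coprime on m)) (x : ι → ℤ) :
    ∃ X : ℤ, ∀ i, (m i : ℤ) ∣ X - x i := by
  obtain ⟨X, hX⟩ := Ideal.exists_forall_sub_mem_ideal (I := fun i => Ideal.span {(m i : ℤ)})
    (fun i j hij => (Ideal.isCoprime_span_singleton_iff _ _).2
      (Nat.isCoprime_iff_coprime.2 (hm hij))) x
  exact ⟨X, fun i => Ideal.mem_span_singleton.1 (hX i)⟩

theorem lt_jacobsthal_mul_prod {m c L : ℕ} {Q : Finset ℕ} (hm : m ≠ 0)
    (hQ : ∀ q ∈ Q, q.Prime ∧ q.Coprime m)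
    (hcard : #{i ∈ range L | m.Coprime (c + i)} ≤ #Q) :
    L < jacobsthal (m * ∏ q ∈ Q, q) := by
  set I := {i ∈ range L | m.Coprime (c + i)}
  obtain ⟨σ⟩ : Nonempty (I ↪ Q) :=
    Function.Embedding.nonempty_of_card_le (by simpa only [Fintype.card_coe] using hcard)
  have hσ (i : I) : (σ i : ℕ).Prime ∧ (σ i : ℕ).Coprime m := hQ _ (σ i).2
  let μ : Option I → ℕ := fun o => o.elim m fun i => σ i
  have hμ : Pairwise (Nat.Coprime on μ) := by
    rintro (_ | i) (_ | i') hne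
    · exact absurd rfl hne
    · exact (hσ i').2.symm
    · exact (hσ i).2
    · refine (Nat.coprime_primes (hσ i).1 (hσ i').1).2 fun h => hne ?_
      rw [σ.injective (Subtype.ext h)]
  obtain ⟨X, hX⟩ := Int.exists_forall_dvd_sub hμ fun o => o.elim (c : ℤ) fun i => -(i : ℤ)
  have hprod : ∏ q ∈ Q, q ≠ 0 := prod_ne_zero_iff.2 fun q hq => (hQ q hq).1.ne_zero
  refine lt_jacobsthal_of_forall_gcd_ne_one (mul_ne_zero hm hprod) X fun i hi => ?_
  by_cases hci : m.Coprime (c + i)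
  · have hiI : i ∈ I := mem_filter.2 ⟨mem_range.2 hi, hci⟩
    have hσX : ((σ ⟨i, hiI⟩ : ℕ) : ℤ) ∣ X + i := by
      simpa [μ] using hX (some ⟨i, hiI⟩)
    exact Int.gcd_ne_one_of_dvd (hσ _).1.ne_one hσX ((dvd_prod_of_mem _ (σ _).2).mul_left m)
  · refine Int.gcd_ne_one_of_dvd hci ?_ ((Nat.gcd_dvd_left _ _).mul_right _)
    have hmX : ((m.gcd (c + i) : ℕ) : ℤ) ∣ X - c :=
      (Int.natCast_dvd_natCast.2 (Nat.gcd_dvd_left _ _)).trans (hX none)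
    have hci' : ((m.gcd (c + i) : ℕ) : ℤ) ∣ ((c + i : ℕ) : ℤ) :=
      Int.natCast_dvd_natCast.2 (Nat.gcd_dvd_right _ _)
    have hsum : X + i = (X - c) + ((c + i : ℕ) : ℤ) := by push_cast; ring
    exact hsum ▸ dvd_add hmX hci'

theorem coprime_fifteen_mod_add (a d : ℕ) :
    Nat.Coprime 15 (a % 15 + d) ↔ Nat.Coprime 15 (a + d) :=
  Iff.of_eq (((Nat.periodic_coprime 15).add_const d).map_mod_nat a)

theorem count_coprime_fifteen_add (a : ℕ) :
    Nat.count (fun d => Nat.Coprime 15 (a + d)) 15 = 8 := by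
  simp only [← coprime_fifteen_mod_add a]
  have key : ∀ r < 15, Nat.count (fun d => Nat.Coprime 15 (r + d)) 15 = 8 := by decide
  exact key _ (Nat.mod_lt _ (by norm_num))

theorem card_filter_coprime_three_add_range (j : ℕ) :
    #{i ∈ range (8 + 15 * j) | Nat.Coprime 15 (3 + i)} = 8 * j + 3 := by
  rw [range_eq_Ico, ← Ico_union_Ico_eq_Ico (b := 8) (by omega) (by omega), ← range_eq_Ico,
    card_filter_union_Ico_of_periodic ((Nat.periodic_coprime 15).const_add 3) (by simp) j,
    count_coprime_fifteen_add]
  have : #{i ∈ range 8 | Nat.Coprime 15 (3 + i)} = 3 := by decide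
  omega

-- Found by search: any `8` residues in `[0, 15)` each of whose translates contains `4` integers
-- prime to `15` would do.
def domPattern : Finset ℕ := {0, 1, 2, 3, 4, 5, 8, 12}

theorem lt_fifteen_of_mem_domPattern {d : ℕ} (hd : d ∈ domPattern) : d < 15 := by
  revert d
  decide

theorem four_le_card_filter_coprime_add_domPattern (a : ℕ) :
    4 ≤ #{d ∈ domPattern | Nat.Coprime 15 (a + d)} := by
  simp only [← coprime_fifteen_mod_add a]
  have key : ∀ r < 15, 4 ≤ #{d ∈ domPattern | Nat.Coprime 15 (r + d)} := by decide
  exact key _ (Nat.mod_lt _ (by norm_num))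

def domSet (j : ℕ) : Finset ℕ := domPattern ∪ Ico 15 (15 + 15 * j)

theorem lt_of_mem_domSet {j d : ℕ} (hd : d ∈ domSet j) : d < 15 + 15 * j := by
  rcases mem_union.1 hd with hd | hd
  · have := lt_fifteen_of_mem_domPattern hd
    omega
  · exact (mem_Ico.1 hd).2

theorem card_domSet_le (j : ℕ) : #(domSet j) ≤ 8 + 15 * j :=
  (card_union_le _ _).trans (by simp [domPattern])

theorem lt_card_filter_coprime_add_domSet (j a : ℕ) :
    8 * j + 3 < #{d ∈ domSet j | Nat.Coprime 15 (a + d)} := by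
  rw [domSet, card_filter_union_Ico_of_periodic ((Nat.periodic_coprime 15).const_add a)
      (fun _ => lt_fifteen_of_mem_domPattern) j, count_coprime_fifteen_add]
  have := four_le_card_filter_coprime_add_domPattern a
  omega

theorem exists_finset_prime_gt (M k : ℕ) :
    ∃ Q : Finset ℕ, #Q = k ∧ ∀ q ∈ Q, q.Prime ∧ M < q := by
  obtain ⟨Q, hQ, hcard⟩ :=
    (Nat.infinite_setOfPred_prime.sdiff (Set.finite_le_nat M)).exists_subset_card_eq k
  exact ⟨Q, hcard, fun q hq => by simpa using hQ hq⟩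

theorem stmt14_general (j : ℕ) :
    ∃ n : ℕ, j < n.primeFactors.card ∧
      totalDomNum (unitaryCayley n) < jacobsthal n := by
  obtain ⟨Q, hQcard, hQ⟩ := exists_finset_prime_gt (15 + 15 * j) (8 * j + 3)
  have hQ15 (q : ℕ) (hq : q ∈ Q) : q.Prime ∧ q.Coprime 15 :=
    ⟨(hQ q hq).1, (hQ q hq).1.coprime_iff_not_dvd.2 fun h => by
      have := Nat.le_of_dvd (by norm_num) h; have := (hQ q hq).2; omega⟩
  have hprod : ∏ q ∈ Q, q ≠ 0 := prod_ne_zero_iff.2 fun q hq => (hQ q hq).1.ne_zero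
  refine ⟨15 * ∏ q ∈ Q, q, ?_, ?_⟩
  · calc j < #Q := by omega
      _ = (∏ q ∈ Q, q).primeFactors.card := by
        rw [Nat.primeFactors_prod fun q hq => (hQ q hq).1]
      _ ≤ _ := card_le_card (Nat.primeFactors_mono (dvd_mul_left _ _) (by positivity))
  · have hD (q : ℕ) (hq : q ∈ Q) (d : ℕ) (hd : d ∈ domSet j) : d < q :=
      (lt_of_mem_domSet hd).trans (hQ q hq).2
    have hcover (a : ℕ) : #Q < #{d ∈ domSet j | Nat.Coprime 15 (a + d)} := by
      rw [hQcard]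
      exact lt_card_filter_coprime_add_domSet j a
    calc totalDomNum _ ≤ #(domSet j) := totalDomNum_unitaryCayley_le_card (by omega) fun a =>
          exists_coprime_mul_prod_add (fun q hq => (hQ q hq).1) hD (hcover a)
      _ ≤ 8 + 15 * j := card_domSet_le j
      _ < jacobsthal _ := lt_jacobsthal_mul_prod (by norm_num) hQ15
          (by rw [card_filter_coprime_three_add_range, hQcard])

theorem stmt14 (j : ℕ) (hj : 0 < j) :
    ∃ n : ℕ, j < n.primeFactors.card ∧
      totalDomNum (unitaryCayley n) < jacobsthal n :=
  stmt14_general j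
end
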